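/- Linearizing the equation (p^I)' = -γ p^I + r p^I p^S (α g_αα(α,θ)/g_α(α,θ)) - r p^I (1 - p^I) at t = 0 with initial conditions I₀ = ε, S₀ = 1-ε, p^I₀ = ε/(1-ε), p^S₀ = (1-2ε)/(1-ε), α₀ = θ₀ = 1: the derivative (p^I)'(0) is positive for all sufficiently small ε > 0 if and only if r (g_αα(1,1)/g_α(1,1) - 1) > γ, equivalently (r/(r+γ)) · g_αα(1,1)/g_α(1,1) > 1. -/

import Mathlib

open Set Filter Topology

/- Writing `p = ε / (1 - ε)`, one has `p^S₀ = 1 - p`, so the linearized derivative factors as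
`p · (r (c - 1) (1 - p) - γ)` with `c = g_αα(1,1) / g_α(1,1)`. Since `p > 0` and `p → 0⁺` as
`ε → 0⁺`, its sign is eventually that of `r (c - 1) - γ`; in the borderline case
`r (c - 1) = γ` the factor `1 - p < 1` makes it negative. -/

lemma one_sub_two_mul_div_one_sub {ε : ℝ} (hε : ε ≠ 1) :
    (1 - 2 * ε) / (1 - ε) = 1 - ε / (1 - ε) := by
  have : 1 - ε ≠ 0 := sub_ne_zero.2 hε.symm
  field_simp
  ring

lemma tendsto_div_one_sub_nhdsGT_zero :
    Tendsto (fun ε : ℝ => ε / (1 - ε)) (𝓝[>] 0) (𝓝[>] 0) := by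
  refine tendsto_nhdsWithin_iff.2 ⟨?_, ?_⟩
  · have hcont : ContinuousAt (fun ε : ℝ => ε / (1 - ε)) 0 :=
      continuousAt_id.div (continuousAt_const.sub continuousAt_id) (by norm_num)
    simpa using hcont.tendsto.mono_left nhdsWithin_le_nhds
  · filter_upwards [Ioo_mem_nhdsGT (zero_lt_one' ℝ)] with ε ⟨hε₀, hε₁⟩
    exact div_pos hε₀ (sub_pos.2 hε₁)

lemma eventually_lt_mul_one_sub_iff {α : Type*} {l : Filter α} [l.NeBot] {u : α → ℝ}
    (hu : Tendsto u l (𝓝[>] 0)) {a b : ℝ} (hb : 0 ≤ b) :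
    (∀ᶠ x in l, b < a * (1 - u x)) ↔ b < a := by
  have hu₀ : Tendsto u l (𝓝 0) := hu.mono_right nhdsWithin_le_nhds
  constructor
  · intro h
    by_contra! hab
    have hsmall : ∀ᶠ x in l, u x ∈ Ioo 0 1 := by
      filter_upwards [tendsto_nhdsWithin_iff.1 hu |>.2, hu₀.eventually (gt_mem_nhds one_pos)]
        with x hpos hlt
      exact ⟨hpos, hlt⟩
    obtain ⟨x, hbx, hpos, hlt⟩ := (h.and hsmall).exists
    nlinarith
  · intro hab
    have hlim : Tendsto (fun x => a * (1 - u x)) l (𝓝 a) := by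
      simpa using ((tendsto_const_nhds (x := (1 : ℝ))).sub hu₀).const_mul a
    exact hlim.eventually_const_lt hab

theorem stmt_7_general
    (r γ : ℝ) (hγ : 0 < γ)
    (gα gαα : ℝ) :
    (∀ᶠ ε in 𝓝[>] (0:ℝ),
        0 < -γ * (ε / (1 - ε))
            + r * (ε / (1 - ε)) * ((1 - 2 * ε) / (1 - ε)) * (gαα / gα)
            - r * (ε / (1 - ε)) * (1 - ε / (1 - ε)))
      ↔ r * (gαα / gα - 1) > γ := by
  have hfactor : ∀ᶠ ε in 𝓝[>] (0:ℝ),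
      (0 < -γ * (ε / (1 - ε))
            + r * (ε / (1 - ε)) * ((1 - 2 * ε) / (1 - ε)) * (gαα / gα)
            - r * (ε / (1 - ε)) * (1 - ε / (1 - ε)))
        ↔ γ < r * (gαα / gα - 1) * (1 - ε / (1 - ε)) := by
    filter_upwards [Ioo_mem_nhdsGT (zero_lt_one' ℝ)] with ε ⟨hε₀, hε₁⟩
    rw [one_sub_two_mul_div_one_sub hε₁.ne]
    set p := ε / (1 - ε)
    have hp : 0 < p := div_pos hε₀ (sub_pos.2 hε₁)
    rw [show -γ * p + r * p * (1 - p) * (gαα / gα) - r * p * (1 - p)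
        = p * (r * (gαα / gα - 1) * (1 - p) - γ) by ring, mul_pos_iff_of_pos_left hp, sub_pos]
  rw [eventually_congr hfactor,
    eventually_lt_mul_one_sub_iff tendsto_div_one_sub_nhdsGT_zero hγ.le]

open Set Filter Topology in
/-- Epidemic threshold: with initial conditions `p^I₀ = ε/(1-ε)`, `p^S₀ = (1-2ε)/(1-ε)`,
`α₀ = θ₀ = 1`, the linearized derivative
`(p^I)'(0) = -γ p^I₀ + r p^I₀ p^S₀ (g_αα(1,1)/g_α(1,1)) - r p^I₀ (1 - p^I₀)`
is positive for all sufficiently small `ε > 0` iff `r (g_αα(1,1)/g_α(1,1) - 1) > γ`. -/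
theorem stmt_7 (s : Finset ℕ) (μ₀ : ℕ → ℝ) (hμ : ∀ k, 0 ≤ μ₀ k)
    (r γ : ℝ) (hr : 0 < r) (hγ : 0 < γ)
    (gα gαα : ℝ)
    (hgα : gα = ∑ k ∈ s, (k : ℝ) * μ₀ k)
    (hgαα : gαα = ∑ k ∈ s, (k : ℝ) * ((k : ℝ) - 1) * μ₀ k)
    (hgαpos : 0 < gα) :
    (∀ᶠ ε in 𝓝[>] (0:ℝ),
        0 < -γ * (ε / (1 - ε))
            + r * (ε / (1 - ε)) * ((1 - 2 * ε) / (1 - ε)) * (gαα / gα)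
            - r * (ε / (1 - ε)) * (1 - ε / (1 - ε)))
      ↔ r * (gαα / gα - 1) > γ :=
  stmt_7_general r γ hγ gα gαα
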